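/- arXiv:0705.0938 — 7 statements merged into one kernel-verified Lean document; each statement's English description precedes it below -/
import Mathlib

section
/- If u,v are twins in a connected graph G, S resolves G, u ∈ S, and v ∉ S, then (S \ {u}) ∪ {v} also resolves G. -/
/-- Two distinct vertices are twins if they have the same open neighbourhood
or the same closed neighbourhood. -/
def Twins {V : Type*} (G : SimpleGraph V) (u v : V) : Prop :=
  u ≠ v ∧ ((∀ x, G.Adj u x ↔ G.Adj v x) ∨ (∀ x, (G.Adj u x ∨ u = x) ↔ (G.Adj v x ∨ v = x)))

/-- `S` resolves `G` if every pair of distinct vertices has different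
distances to some vertex of `S`. -/
def Resolves {V : Type*} (G : SimpleGraph V) (S : Set V) : Prop :=
  ∀ v w : V, v ≠ w → ∃ x ∈ S, G.dist v x ≠ G.dist w x

/-!
Swapping two twins is an automorphism of `G`. Automorphisms preserve distances, so they map
resolving sets to resolving sets, and the swap maps `S` onto `(S \ {u}) ∪ {v}`.
-/

namespace SimpleGraph

variable {V W : Type*} {G : SimpleGraph V} {H : SimpleGraph W}

theorem Hom.edist_map_le (f : G →g H) (a b : V) : H.edist (f a) (f b) ≤ G.edist a b := by
  by_cases hab : G.edist a b = ⊤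
  · simp [hab]
  obtain ⟨p, hp⟩ := exists_walk_of_edist_ne_top hab
  calc H.edist (f a) (f b) ≤ (p.map f).length := SimpleGraph.edist_le _
    _ = G.edist a b := by rw [Walk.length_map, hp]

theorem Iso.edist_map (e : G ≃g H) (a b : V) : H.edist (e a) (e b) = G.edist a b :=
  le_antisymm (e.toHom.edist_map_le a b) (by simpa using e.symm.toHom.edist_map_le (e a) (e b))

theorem Iso.dist_map (e : G ≃g H) (a b : V) : H.dist (e a) (e b) = G.dist a b :=
  congrArg ENat.toNat (e.edist_map a b)

end SimpleGraph

section

variable {V : Type*} {G : SimpleGraph V} {u v : V}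

theorem Resolves.image_iso {S : Set V} (hS : Resolves G S) (e : G ≃g G) :
    Resolves G (e '' S) := by
  intro a b hab
  obtain ⟨x, hx, hdist⟩ := hS (e.symm a) (e.symm b) (e.symm.injective.ne hab)
  refine ⟨e x, Set.mem_image_of_mem e hx, ?_⟩
  rwa [← e.apply_symm_apply a, ← e.apply_symm_apply b, e.dist_map, e.dist_map]

theorem Twins.adj_iff_of_ne (h : Twins G u v) {b : V} (hbu : b ≠ u) (hbv : b ≠ v) :
    G.Adj u b ↔ G.Adj v b := by
  rcases h.2 with hopen | hclosed
  · exact hopen b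
  · simpa [hbu.symm, hbv.symm] using hclosed b

theorem Twins.adj_swap [DecidableEq V] (h : Twins G u v) (a b : V) :
    G.Adj (Equiv.swap u v a) (Equiv.swap u v b) ↔ G.Adj a b := by
  have hadj : ∀ c, c ≠ u → c ≠ v → (G.Adj u c ↔ G.Adj v c) := fun _ => h.adj_iff_of_ne
  grind [SimpleGraph.adj_comm, SimpleGraph.Adj.ne]

def Twins.swapIso [DecidableEq V] (h : Twins G u v) : G ≃g G where
  toEquiv := Equiv.swap u v
  map_rel_iff' := h.adj_swap _ _

end

theorem twin_swap_resolves_general {V : Type*} (G : SimpleGraph V)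
    (u v : V) (h : Twins G u v) (S : Set V) (hS : Resolves G S)
    (hu : u ∈ S) (hv : v ∉ S) :
    Resolves G ((S \ {u}) ∪ {v}) := by
  classical
  have hswap : h.swapIso '' S = (S \ {u}) ∪ {v} := by
    rw [Set.union_singleton, Set.insert_sdiff_singleton_comm h.1.symm]
    exact Equiv.image_swap_of_mem_of_notMem hu hv
  exact hswap ▸ hS.image_iso h.swapIso

theorem twin_swap_resolves {V : Type*} (G : SimpleGraph V) (hG : G.Connected)
    (u v : V) (h : Twins G u v) (S : Set V) (hS : Resolves G S)
    (hu : u ∈ S) (hv : v ∉ S) :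
    Resolves G ((S \ {u}) ∪ {v}) :=
  twin_swap_resolves_general G u v h S hS hu hv
end

section
/- Let T be a twin-set of cardinality at least 3 in a connected graph G, and u ∈ T. Then the metric dimension satisfies β(G) = β(G \ u) + 1. -/
/-!
Swapping two twins is an automorphism of `G`, so twins are equidistant from every other vertex
and a pair of twins is separated only by the twins themselves: a resolving set contains all but at
most one vertex of a twin-set. Collapsing `u` onto a twin `t` shows that deleting `u` preserves the
distances between the remaining vertices. Hence a resolving set of `G \ u` together with `u`
resolves `G`; conversely, a minimum resolving set of `G` may be assumed (after a swap) to contain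
`u`, and since `|T| ≥ 3` it also contains some `t ∈ T \ {u}`, which separates in `G \ u` every
pair that `u` separated.
-/

open scoped Classical

/-- The metric dimension: the minimum cardinality of a resolving set. -/
noncomputable def metricDim {V : Type*} (G : SimpleGraph V) : ℕ :=
  sInf {n | ∃ S : Set V, Resolves G S ∧ S.ncard = n}

namespace SimpleGraph

variable {V W : Type*} {G : SimpleGraph V} {G' : SimpleGraph W} {f : V → W}

lemma Walk.exists_length_le_of_adj_imp
    (hf : ∀ ⦃a b⦄, G.Adj a b → f a = f b ∨ G'.Adj (f a) (f b)) {a b : V}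
    (p : G.Walk a b) : ∃ q : G'.Walk (f a) (f b), q.length ≤ p.length := by
  induction p with
  | nil => exact ⟨.nil, le_rfl⟩
  | cons hab p ih =>
    obtain ⟨q, hq⟩ := ih
    rcases hf hab with heq | hadj
    · exact ⟨q.copy heq.symm rfl, by simp; omega⟩
    · exact ⟨.cons hadj q, by simp; omega⟩

lemma edist_le_of_adj_imp (hf : ∀ ⦃a b⦄, G.Adj a b → f a = f b ∨ G'.Adj (f a) (f b))
    (a b : V) : G'.edist (f a) (f b) ≤ G.edist a b := by
  by_cases hr : G.Reachable a b
  · obtain ⟨p, hp⟩ := hr.exists_walk_length_eq_edist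
    obtain ⟨q, hq⟩ := p.exists_length_le_of_adj_imp hf
    exact (edist_le q).trans (hp ▸ by exact_mod_cast hq)
  · simp [edist_eq_top_of_not_reachable hr]

lemma Connected.dist_self_ne (hG : G.Connected) {v w : V} (h : v ≠ w) :
    G.dist v v ≠ G.dist w v := by
  rw [dist_self]
  exact (hG.pos_dist_of_ne h.symm).ne

end SimpleGraph

open SimpleGraph

namespace Twins

variable {V : Type*} {G : SimpleGraph V} {u t : V}

lemma symm (h : Twins G u t) : Twins G t u :=
  ⟨h.1.symm, h.2.imp (fun h' x => (h' x).symm) (fun h' x => (h' x).symm)⟩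

lemma adj_of_adj (h : Twins G u t) {x : V} (hxt : x ≠ t) (hux : G.Adj u x) : G.Adj t x := by
  rcases h.2 with h' | h'
  · exact (h' x).mp hux
  · exact ((h' x).mp (Or.inl hux)).resolve_right hxt.symm

lemma adj_swap_s7 (h : Twins G u t) {a b : V} (hab : G.Adj a b) :
    G.Adj (Equiv.swap u t a) (Equiv.swap u t b) := by
  have hut := @h.adj_of_adj
  have htu := @h.symm.adj_of_adj
  simp only [Equiv.swap_apply_def]
  split_ifs <;> grind [SimpleGraph.Adj.symm, SimpleGraph.irrefl]

lemma edist_swap (h : Twins G u t) (a b : V) :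
    G.edist (Equiv.swap u t a) (Equiv.swap u t b) = G.edist a b := by
  have hσ : ∀ ⦃a b⦄, G.Adj a b →
      Equiv.swap u t a = Equiv.swap u t b ∨ G.Adj (Equiv.swap u t a) (Equiv.swap u t b) :=
    fun _ _ hab => Or.inr (h.adj_swap_s7 hab)
  refine le_antisymm (edist_le_of_adj_imp hσ a b) ?_
  simpa using edist_le_of_adj_imp hσ (Equiv.swap u t a) (Equiv.swap u t b)

lemma dist_swap (h : Twins G u t) (a b : V) :
    G.dist (Equiv.swap u t a) (Equiv.swap u t b) = G.dist a b :=
  congrArg ENat.toNat (h.edist_swap a b)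

lemma dist_eq_dist (h : Twins G u t) {x : V} (hxu : x ≠ u) (hxt : x ≠ t) :
    G.dist x u = G.dist x t := by
  simpa [Equiv.swap_apply_of_ne_of_ne hxu hxt] using (h.dist_swap x u).symm

lemma dist_ne_dist (hG : G.Connected) (h : Twins G u t) {v w : V} (hv : v ≠ u)
    (hw : w ≠ u) (hvw : G.dist v u ≠ G.dist w u) : G.dist v t ≠ G.dist w t := by
  by_cases hvt : v = t
  · subst hvt
    exact hG.dist_self_ne (by rintro rfl; exact hvw rfl)
  by_cases hwt : w = t
  · subst hwt
    exact (hG.dist_self_ne (Ne.symm hvt)).symm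
  rwa [← h.dist_eq_dist hv hvt, ← h.dist_eq_dist hw hwt]

lemma edist_induce (h : Twins G u t) (a b : {v // v ≠ u}) :
    (G.induce {v | v ≠ u}).edist a b = G.edist a b := by
  refine le_antisymm ?_ <|
    edist_le_of_adj_imp (f := Subtype.val) (fun _ _ hab => Or.inr hab) a b
  -- reroute walks through `u` via its twin `t`
  let c : V → {v // v ≠ u} := fun v => if hv : v = u then ⟨t, h.1.symm⟩ else ⟨v, hv⟩
  have hc : ∀ v : {v // v ≠ u}, c v = v := fun v => dif_neg v.2
  have hcadj : ∀ ⦃x y⦄, G.Adj x y →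
      c x = c y ∨ (G.induce {v | v ≠ u}).Adj (c x) (c y) := by
    have hut := @h.adj_of_adj
    intro x y hxy
    simp only [c, Subtype.ext_iff, induce_adj]
    split_ifs <;> grind [SimpleGraph.Adj.symm, SimpleGraph.irrefl]
  simpa only [hc] using edist_le_of_adj_imp hcadj a b

lemma dist_induce (h : Twins G u t) (a b : {v // v ≠ u}) :
    (G.induce {v | v ≠ u}).dist a b = G.dist a b :=
  congrArg ENat.toNat (h.edist_induce a b)

lemma connected_induce (hG : G.Connected) (h : Twins G u t) :
    (G.induce {v | v ≠ u}).Connected where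
  preconnected a b := by
    rw [← edist_ne_top_iff_reachable, h.edist_induce, edist_ne_top_iff_reachable]
    exact hG a b
  nonempty := ⟨⟨t, h.1.symm⟩⟩

end Twins

section Resolves

variable {V : Type*} {G : SimpleGraph V} {S : Set V} {u t : V}

lemma resolves_univ (hG : G.Connected) : Resolves G Set.univ :=
  fun v _ hvw => ⟨v, trivial, hG.dist_self_ne hvw⟩

lemma metricDim_le (hS : Resolves G S) : metricDim G ≤ S.ncard :=
  Nat.sInf_le ⟨S, hS, rfl⟩

lemma exists_resolves_ncard_eq_metricDim (hG : G.Connected) :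
    ∃ S, Resolves G S ∧ S.ncard = metricDim G :=
  Nat.sInf_mem (s := {n | ∃ S : Set V, Resolves G S ∧ S.ncard = n})
    ⟨_, Set.univ, resolves_univ hG, rfl⟩

lemma Resolves.image_swap (h : Twins G u t) (hS : Resolves G S) :
    Resolves G (Equiv.swap u t '' S) := by
  intro v w hvw
  obtain ⟨x, hxS, hx⟩ := hS (Equiv.swap u t v) (Equiv.swap u t w) (by simpa using hvw)
  refine ⟨Equiv.swap u t x, Set.mem_image_of_mem _ hxS, ?_⟩
  rwa [← h.dist_swap v, ← h.dist_swap w, Equiv.swap_apply_self]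

/-- Only `v` and `w` themselves separate two twins. -/
lemma Resolves.mem_or_mem (hS : Resolves G S) {v w : V} (h : Twins G v w) :
    v ∈ S ∨ w ∈ S := by
  by_contra! hvw
  obtain ⟨x, hxS, hx⟩ := hS v w h.1
  rw [dist_comm, h.dist_eq_dist (ne_of_mem_of_not_mem hxS hvw.1)
    (ne_of_mem_of_not_mem hxS hvw.2), dist_comm] at hx
  exact hx rfl

lemma Resolves.insert_image_val (hG : G.Connected) (h : Twins G u t) {S : Set {v // v ≠ u}}
    (hS : Resolves (G.induce {v | v ≠ u}) S) : Resolves G (insert u (Subtype.val '' S)) := by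
  intro v w hvw
  by_cases hv : v = u
  · subst hv
    exact ⟨v, Set.mem_insert _ _, hG.dist_self_ne hvw⟩
  by_cases hw : w = u
  · subst hw
    exact ⟨w, Set.mem_insert _ _, (hG.dist_self_ne hvw.symm).symm⟩
  obtain ⟨x, hxS, hx⟩ := hS ⟨v, hv⟩ ⟨w, hw⟩ (by simpa using hvw)
  rw [h.dist_induce, h.dist_induce] at hx
  exact ⟨x, Set.mem_insert_of_mem _ (Set.mem_image_of_mem _ hxS), hx⟩

lemma Resolves.preimage_val (hG : G.Connected) (h : Twins G u t) (ht : t ∈ S)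
    (hS : Resolves G S) : Resolves (G.induce {v | v ≠ u}) (Subtype.val ⁻¹' S) := by
  intro v w hvw
  obtain ⟨x, hxS, hx⟩ := hS v w (Subtype.val_injective.ne hvw)
  by_cases hxu : x = u
  · subst hxu
    refine ⟨⟨t, h.1.symm⟩, ht, ?_⟩
    rw [h.dist_induce, h.dist_induce]
    exact h.dist_ne_dist hG v.2 w.2 hx
  · refine ⟨⟨x, hxu⟩, hxS, ?_⟩
    rwa [h.dist_induce, h.dist_induce]

end Resolves

section MetricDim

variable {V : Type*} {G : SimpleGraph V} {u t : V}

lemma metricDim_le_metricDim_induce_add_one (hG : G.Connected) (h : Twins G u t) :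
    metricDim G ≤ metricDim (G.induce {v | v ≠ u}) + 1 := by
  obtain ⟨S, hS, hcard⟩ := exists_resolves_ncard_eq_metricDim (h.connected_induce hG)
  calc metricDim G ≤ (insert u (Subtype.val '' S)).ncard :=
        metricDim_le (hS.insert_image_val hG h)
    _ ≤ (Subtype.val '' S).ncard + 1 := Set.ncard_insert_le _ _
    _ = metricDim (G.induce {v | v ≠ u}) + 1 := by
      rw [Set.ncard_image_of_injective _ Subtype.val_injective, hcard]

lemma exists_resolves_mem_ncard_eq_metricDim (hG : G.Connected) (h : Twins G u t) :
    ∃ S, Resolves G S ∧ u ∈ S ∧ S.ncard = metricDim G := by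
  obtain ⟨S, hS, hcard⟩ := exists_resolves_ncard_eq_metricDim hG
  rcases hS.mem_or_mem h with hu | ht
  · exact ⟨S, hS, hu, hcard⟩
  · exact ⟨Equiv.swap u t '' S, hS.image_swap h, ⟨t, ht, Equiv.swap_apply_right u t⟩,
      (Set.ncard_image_of_injective _ (Equiv.injective _)).trans hcard⟩

lemma ncard_preimage_val_add_one [Finite V] {S : Set V} (hu : u ∈ S) :
    (Subtype.val ⁻¹' S : Set {v // v ≠ u}).ncard + 1 = S.ncard := by
  rw [← Set.ncard_image_of_injective _ Subtype.val_injective]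
  convert Set.ncard_sdiff_singleton_add_one hu using 3
  ext; simp [and_comm]

lemma metricDim_induce_add_one_le [Finite V] (hG : G.Connected) {t₁ t₂ : V}
    (h₁ : Twins G u t₁) (h₂ : Twins G u t₂) (h₁₂ : Twins G t₁ t₂) :
    metricDim (G.induce {v | v ≠ u}) + 1 ≤ metricDim G := by
  obtain ⟨S, hS, hu, hcard⟩ := exists_resolves_mem_ncard_eq_metricDim hG h₁
  have hS' : Resolves (G.induce {v | v ≠ u}) (Subtype.val ⁻¹' S) :=
    (hS.mem_or_mem h₁₂).elim (hS.preimage_val hG h₁) (hS.preimage_val hG h₂)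
  calc metricDim (G.induce {v | v ≠ u}) + 1
        ≤ (Subtype.val ⁻¹' S : Set {v // v ≠ u}).ncard + 1 :=
          Nat.add_le_add_right (metricDim_le hS') 1
    _ = metricDim G := (ncard_preimage_val_add_one hu).trans hcard

end MetricDim

theorem metricDim_delete_twin {V : Type*} [Fintype V] (G : SimpleGraph V) (hG : G.Connected)
    (T : Set V) (hT : ∀ u ∈ T, ∀ v ∈ T, u ≠ v → Twins G u v) (h3 : 3 ≤ T.ncard)
    (u : V) (hu : u ∈ T) :
    metricDim G = metricDim (G.induce {v | v ≠ u}) + 1 := by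
  have h2 : 1 < (T \ {u}).ncard := by
    have := Set.ncard_sdiff_singleton_add_one hu
    omega
  obtain ⟨t₁, t₂, ⟨ht₁, ht₁u⟩, ⟨ht₂, ht₂u⟩, h₁₂⟩ :=
    (Set.one_lt_ncard_iff).mp h2
  have h₁ := hT u hu t₁ ht₁ (Ne.symm ht₁u)
  have h₂ := hT u hu t₂ ht₂ (Ne.symm ht₂u)
  exact le_antisymm (metricDim_le_metricDim_induce_add_one hG h₁)
    (metricDim_induce_add_one_le hG h₁ h₂ (hT t₁ ht₁ t₂ ht₂ h₁₂))
end

section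
/- Every connected graph G with metric dimension β and diameter D has at least β + D vertices. -/
/-- The diameter: the maximum distance between two vertices. -/
noncomputable def gdiam {V : Type*} (G : SimpleGraph V) : ℕ :=
  sSup {d | ∃ u v : V, G.dist u v = d}

/-!
Let `u, v` realize the diameter `D` and let `u = x₀, …, x_D = v` be a geodesic. Since
`dist u xₖ = k`, the vertex `u` separates any two of `x₁, …, x_D`, while a vertex separates
itself from every other vertex. Hence the complement of `{x₁, …, x_D}` is a resolving set of
size `|V| - D`.
-/

namespace SimpleGraph

variable {V : Type*} {G : SimpleGraph V}

lemma Walk.dist_getVert_of_length_eq_dist {u v : V} (p : G.Walk u v)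
    (hp : p.length = G.dist u v) {k : ℕ} (hk : k ≤ p.length) :
    G.dist u (p.getVert k) = k := by
  have h_take : G.dist u (p.getVert k) ≤ k := by
    simpa [hk] using G.dist_le (p.take k)
  have h_drop : G.dist (p.getVert k) v ≤ p.length - k := by
    simpa using G.dist_le (p.drop k)
  have := (p.take k).reachable.dist_triangle_left v
  omega

lemma Preconnected.resolves_compl (hG : G.Preconnected) {u : V} {T : Set V} (hu : u ∉ T)
    (hT : T.InjOn (G.dist u)) : Resolves G Tᶜ := by
  intro x y hxy
  by_cases hx : x ∈ T
  · by_cases hy : y ∈ T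
    · refine ⟨u, hu, fun h ↦ hxy (hT hx hy ?_)⟩
      simpa only [dist_comm] using h
    · refine ⟨y, hy, ?_⟩
      rwa [dist_self, Ne, (hG x y).dist_eq_zero_iff]
  · refine ⟨x, hx, ?_⟩
    rw [dist_self, ne_comm, Ne, (hG y x).dist_eq_zero_iff]
    exact hxy.symm

lemma metricDim_le_ncard {S : Set V} (hS : Resolves G S) : metricDim G ≤ S.ncard :=
  Nat.sInf_le ⟨S, hS, rfl⟩

lemma exists_dist_eq_gdiam [Finite V] [Nonempty V] : ∃ u v, G.dist u v = gdiam G := by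
  have hfin : {d | ∃ u v : V, G.dist u v = d}.Finite :=
    (Set.finite_range (Function.uncurry G.dist)).subset fun _ ⟨u, v, huv⟩ ↦ ⟨(u, v), huv⟩
  obtain ⟨u⟩ := ‹Nonempty V›
  exact Nat.sSup_mem (s := {d | ∃ u v : V, G.dist u v = d}) ⟨0, u, u, dist_self⟩ hfin.bddAbove

lemma Reachable.exists_finset_injOn_dist {u v : V} (h : G.Reachable u v) :
    ∃ T : Finset V, u ∉ T ∧ (T : Set V).InjOn (G.dist u) ∧ T.card = G.dist u v := by
  classical
  obtain ⟨p, hp⟩ := h.exists_walk_length_eq_dist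
  have hdist : ∀ k ∈ Finset.Icc 1 p.length, G.dist u (p.getVert k) = k :=
    fun k hk ↦ p.dist_getVert_of_length_eq_dist hp (Finset.mem_Icc.mp hk).2
  refine ⟨(Finset.Icc 1 p.length).image p.getVert, ?_, ?_, ?_⟩
  · rw [Finset.mem_image]
    rintro ⟨k, hk, hku⟩
    have := hdist k hk
    rw [hku, dist_self] at this
    grind
  · intro x hx y hy h
    simp only [Finset.coe_image, Set.mem_image, Finset.mem_coe] at hx hy
    obtain ⟨k, hk, rfl⟩ := hx
    obtain ⟨l, hl, rfl⟩ := hy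
    rw [hdist k hk, hdist l hl] at h
    rw [h]
  · rw [Finset.card_image_of_injOn, Nat.card_Icc, hp, Nat.add_sub_cancel]
    intro k hk l hl hkl
    rw [← hdist k hk, ← hdist l hl, hkl]

lemma Preconnected.metricDim_le_card_sub [Fintype V] (hG : G.Preconnected) {u : V}
    {T : Finset V} (hu : u ∉ T) (hT : (T : Set V).InjOn (G.dist u)) :
    metricDim G ≤ Fintype.card V - T.card := by
  classical
  have := metricDim_le_ncard (hG.resolves_compl (Finset.mem_coe.not.mpr hu) hT)
  rwa [← Finset.coe_compl, Set.ncard_coe_finset, Finset.card_compl] at this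

end SimpleGraph

theorem card_ge_metricDim_add_diam {V : Type*} [Fintype V] (G : SimpleGraph V)
    (hG : G.Connected) :
    metricDim G + gdiam G ≤ Fintype.card V := by
  have := hG.nonempty
  obtain ⟨u, v, huv⟩ := G.exists_dist_eq_gdiam
  obtain ⟨T, hu, hT, hcard⟩ := (hG u v).exists_finset_injOn_dist
  have hdim := hG.preconnected.metricDim_le_card_sub hu hT
  have := T.card_le_univ
  omega
end

section
/- Let G be a connected graph that is not K_1, and let G* be its twin graph (the quotient by the equivalence relation 'equal or twins'). Then diam(G*) ≤ diam(G); moreover diam(G*) < diam(G) if and only if G* is a complete graph. In particular, if diam(G) ≥ 3, then diam(G) = diam(G*). -/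
/-- The equivalence relation "equal or twins". -/
def twinSetoid {V : Type*} (G : SimpleGraph V) : Setoid V :=
  ⟨fun u v => u = v ∨ Twins G u v, by
    constructor
    · exact fun x => Or.inl rfl
    · rintro x y (rfl | ⟨hne, h⟩)
      · exact Or.inl rfl
      · exact Or.inr ⟨hne.symm, h.imp (fun h x => (h x).symm) (fun h x => (h x).symm)⟩
    · rintro x y z (rfl | hxy) (rfl | hyz)
      · exact Or.inl rfl
      · exact Or.inr hyz
      · exact Or.inr hxy
      · by_cases hxz : x = z
        · exact Or.inl hxz
        · refine Or.inr ⟨hxz, ?_⟩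
          obtain ⟨hxy', ho | hc⟩ := hxy <;> obtain ⟨hyz', ho2 | hc2⟩ := hyz
          · exact Or.inl (fun a => (ho a).trans (ho2 a))
          · exfalso
            have hyzadj : G.Adj y z := by
              rcases (hc2 z).mpr (Or.inr rfl) with h | h
              · exact h
              · exact absurd h hyz'
            have hxy_nadj : ¬ G.Adj x y := fun h => G.loopless.1 y ((ho y).mp h)
            have hxz_adj : G.Adj x z := (ho z).mpr hyzadj
            rcases (hc2 x).mpr (Or.inl hxz_adj.symm) with h | h
            · exact hxy_nadj h.symm
            · exact hxy' h.symm
          · exfalso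
            have hxyadj : G.Adj x y := by
              rcases (hc y).mpr (Or.inr rfl) with h | h
              · exact h
              · exact absurd h hxy'
            have hyz_nadj : ¬ G.Adj y z := fun h => G.loopless.1 z ((ho2 z).mp h)
            have hzx_adj : G.Adj z x := (ho2 x).mp hxyadj.symm
            rcases (hc z).mp (Or.inl hzx_adj.symm) with h | h
            · exact hyz_nadj h
            · exact hyz' h
          · exact Or.inr (fun a => (hc a).trans (hc2 a))⟩

/-- The twin graph `G*`: the quotient of `G` by the twin relation, two classes
being adjacent iff some (equivalently, every) pair of their members is adjacent. -/
def twinGraph {V : Type*} (G : SimpleGraph V) : SimpleGraph (Quotient (twinSetoid G)) where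
  Adj a b := a ≠ b ∧ ∃ u v : V, Quotient.mk (twinSetoid G) u = a ∧
      Quotient.mk (twinSetoid G) v = b ∧ G.Adj u v
  symm := by
    constructor
    rintro a b ⟨hab, u, v, hu, hv, h⟩
    exact ⟨hab.symm, v, u, hv, hu, h.symm⟩
  loopless := by
    constructor
    rintro a ⟨h, -⟩
    exact h rfl

/-!
Contracting twin classes never lengthens a walk, and since adjacency of two classes holds between
all of their representatives, a walk of `G*` between distinct classes lifts to a walk of `G` of the
same length between any two representatives. Hence `G` and `G*` have the same distance between
vertices in different classes. Twins are at distance at most `2` (a common neighbour, or an edge),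
so a diametral pair of `G` either realises `diam G = diam G*`, or is a pair of twins, forcing
`diam G ≤ 2` and `diam G* ≤ 1`. Conversely, if `G*` is complete but `diam G ≤ 1`, then `G` is
complete, all its vertices are twins, and `diam G* = 0`.
-/

open SimpleGraph

lemma gdiam_eq_diam {W : Type*} [Finite W] {H : SimpleGraph W} (hH : H.Connected) :
    gdiam H = H.diam := by
  have := hH.nonempty
  have hfin : H.ediam ≠ ⊤ := connected_iff_ediam_ne_top.mp hH
  have hbdd : BddAbove {d | ∃ u v : W, H.dist u v = d} :=
    ⟨H.diam, by rintro _ ⟨u, v, rfl⟩; exact dist_le_diam hfin⟩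
  obtain ⟨u, v, huv⟩ := H.exists_dist_eq_diam
  exact le_antisymm (csSup_le' fun _ ⟨u, v, h⟩ => h ▸ dist_le_diam hfin)
    (le_csSup hbdd ⟨u, v, huv⟩)

lemma SimpleGraph.Connected.eq_top_of_diam_le_one {W : Type*} [Finite W] {H : SimpleGraph W}
    (hH : H.Connected) (h : H.diam ≤ 1) : H = ⊤ := by
  have := hH.nonempty
  ext a b
  refine ⟨Adj.ne, fun hab => dist_eq_one_iff_adj.mp ?_⟩
  have := dist_le_diam (connected_iff_ediam_ne_top.mp hH) (u := a) (v := b)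
  have := hH.pos_dist_of_ne hab
  omega

lemma diam_top_le_one {W : Type*} : (⊤ : SimpleGraph W).diam ≤ 1 := by
  cases subsingleton_or_nontrivial W
  · exact (diam_eq_zero.mpr (Or.inr ‹_›)).trans_le zero_le_one
  · exact diam_top.le

section TwinGraph

variable {V : Type*} {G : SimpleGraph V}

local notation "π" => Quotient.mk (twinSetoid G)

lemma twin_mk_eq_mk_iff {u v : V} : π u = π v ↔ u = v ∨ Twins G u v :=
  ⟨Quotient.exact, fun h => Quotient.sound h⟩

lemma adj_of_twin_of_adj {u u' v : V} (h : u = u' ∨ Twins G u u') (hadj : G.Adj u' v)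
    (hne : u ≠ v) : G.Adj u v := by
  rcases h with rfl | ⟨-, hopen | hclosed⟩
  · exact hadj
  · exact (hopen v).mpr hadj
  · exact ((hclosed v).mpr (Or.inl hadj)).resolve_right hne

lemma twinGraph_adj_mk {u v : V} :
    (twinGraph G).Adj (π u) (π v) ↔ π u ≠ π v ∧ G.Adj u v := by
  refine ⟨fun ⟨hne, u', v', hu, hv, hadj⟩ => ⟨hne, ?_⟩,
    fun ⟨hne, hadj⟩ => ⟨hne, u, v, rfl, rfl, hadj⟩⟩
  have huv' : G.Adj u v' :=
    adj_of_twin_of_adj (twin_mk_eq_mk_iff.mp hu.symm) hadj (by rintro rfl; exact hne hv)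
  exact (adj_of_twin_of_adj (twin_mk_eq_mk_iff.mp hv.symm) huv'.symm
    (by rintro rfl; exact hne rfl)).symm

lemma exists_twinGraph_walk {u v : V} (p : G.Walk u v) :
    ∃ q : (twinGraph G).Walk (π u) (π v), q.length ≤ p.length := by
  induction p with
  | nil => exact ⟨.nil, le_rfl⟩
  | @cons x y z h p ih =>
    obtain ⟨q, hq⟩ := ih
    by_cases hxy : π x = π y
    · exact ⟨q.copy hxy.symm rfl, by simp; omega⟩
    · exact ⟨.cons (twinGraph_adj_mk.mpr ⟨hxy, h⟩) q, by simpa using hq⟩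

lemma exists_walk_of_twinGraph_walk {a b : Quotient (twinSetoid G)} (q : (twinGraph G).Walk a b)
    (hq : ¬ q.Nil) {u v : V} (hu : π u = a) (hv : π v = b) :
    ∃ p : G.Walk u v, p.length = q.length := by
  induction q generalizing u with
  | nil => exact absurd Walk.Nil.nil hq
  | @cons a c b h q ih =>
    subst hu
    by_cases hnil : q.Nil
    · obtain rfl := hnil.eq
      subst hv
      have hadj := (twinGraph_adj_mk.mp h).2
      exact ⟨.cons hadj .nil, by simp [Walk.length_eq_zero_iff.mpr hnil]⟩
    · obtain ⟨w, rfl⟩ := Quotient.exists_rep c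
      obtain ⟨p, hp⟩ := ih hnil rfl hv
      exact ⟨.cons (twinGraph_adj_mk.mp h).2 p, by simp [hp]⟩

lemma twinGraph_connected (hG : G.Connected) : (twinGraph G).Connected := by
  have := hG.nonempty.map π
  refine Connected.mk fun a b => Quotient.inductionOn₂ a b fun u v => ?_
  obtain ⟨q, -⟩ := exists_twinGraph_walk (hG u v).some
  exact ⟨q⟩

lemma twinGraph_dist_mk_le {u v : V} (h : G.Reachable u v) :
    (twinGraph G).dist (π u) (π v) ≤ G.dist u v := by
  obtain ⟨p, hp⟩ := h.exists_walk_length_eq_dist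
  obtain ⟨q, hq⟩ := exists_twinGraph_walk p
  exact (dist_le q).trans (hp ▸ hq)

lemma twinGraph_dist_mk (hG : G.Connected) {u v : V} (hne : π u ≠ π v) :
    (twinGraph G).dist (π u) (π v) = G.dist u v := by
  refine le_antisymm (twinGraph_dist_mk_le (hG u v)) ?_
  obtain ⟨q, hq⟩ := (twinGraph_connected hG).exists_walk_length_eq_dist (π u) (π v)
  obtain ⟨p, hp⟩ := exists_walk_of_twinGraph_walk q (Walk.not_nil_of_ne hne) rfl rfl
  exact hq ▸ hp ▸ dist_le p

lemma Twins.dist_le_two [Nontrivial V] (hG : G.Connected) {u v : V} (h : Twins G u v) :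
    G.dist u v ≤ 2 := by
  obtain ⟨hne, hopen | hclosed⟩ := h
  · obtain ⟨w, huw⟩ := hG.preconnected.exists_adj_of_nontrivial u
    have hvw : G.Adj v w := (hopen w).mp huw
    exact dist_le (.cons huw (.cons hvw.symm .nil))
  · have huv : G.Adj u v := ((hclosed v).mpr (Or.inr rfl)).resolve_right hne
    exact (dist_le huv.toWalk).trans (by simp)

lemma subsingleton_quotient_twinSetoid_top :
    Subsingleton (Quotient (twinSetoid (⊤ : SimpleGraph V))) := by
  refine ⟨Quotient.ind₂ fun u v => twin_mk_eq_mk_iff.mpr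
    (or_iff_not_imp_left.mpr fun hne => ⟨hne, Or.inr fun x => ?_⟩)⟩
  simp only [top_adj]
  tauto

variable [Finite V]

lemma twinGraph_diam_le (hG : G.Connected) : (twinGraph G).diam ≤ G.diam := by
  have := hG.nonempty
  have := hG.nonempty.map π
  obtain ⟨a, b, hab⟩ := (twinGraph G).exists_dist_eq_diam
  obtain ⟨u, rfl⟩ := Quotient.exists_rep a
  obtain ⟨v, rfl⟩ := Quotient.exists_rep b
  exact hab ▸ (twinGraph_dist_mk_le (hG u v)).trans
    (dist_le_diam (connected_iff_ediam_ne_top.mp hG))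

lemma diam_le_two_or_twinGraph_diam_eq [Nontrivial V] (hG : G.Connected) :
    G.diam ≤ 2 ∨ (twinGraph G).diam = G.diam := by
  obtain ⟨u, v, huv⟩ := G.exists_dist_eq_diam
  by_cases h : π u = π v
  · left
    rw [← huv]
    rcases twin_mk_eq_mk_iff.mp h with rfl | htwin
    · simp
    · exact htwin.dist_le_two hG
  · right
    have := hG.nonempty.map π
    refine le_antisymm (twinGraph_diam_le hG) ?_
    rw [← huv, ← twinGraph_dist_mk hG h]
    exact dist_le_diam (connected_iff_ediam_ne_top.mp (twinGraph_connected hG))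

lemma twinGraph_diam_lt_of_eq_top [Nontrivial V] (hG : G.Connected) (htop : twinGraph G = ⊤) :
    (twinGraph G).diam < G.diam := by
  have hpos : G.diam ≠ 0 := connected_iff_diam_ne_zero.mp hG
  have hle : (twinGraph G).diam ≤ 1 := htop ▸ diam_top_le_one
  by_cases h2 : 2 ≤ G.diam
  · omega
  · obtain rfl : G = ⊤ := hG.eq_top_of_diam_le_one (by omega)
    simp only [diam_eq_zero.mpr (Or.inr subsingleton_quotient_twinSetoid_top)]
    omega

end TwinGraph

theorem twinGraph_diam {V : Type*} [Fintype V] (G : SimpleGraph V) (hG : G.Connected)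
    (hV : Nontrivial V) :
    gdiam (twinGraph G) ≤ gdiam G ∧
    (gdiam (twinGraph G) < gdiam G ↔ twinGraph G = ⊤) ∧
    (3 ≤ gdiam G → gdiam G = gdiam (twinGraph G)) := by
  have hG' := twinGraph_connected hG
  rw [gdiam_eq_diam hG, gdiam_eq_diam hG']
  have hle := twinGraph_diam_le hG
  have hcases := diam_le_two_or_twinGraph_diam_eq hG
  refine ⟨hle, ⟨fun hlt => hG'.eq_top_of_diam_le_one (by omega),
    twinGraph_diam_lt_of_eq_top hG⟩, fun h3 => by omega⟩
end

section
/- Every connected graph with diameter D ≥ 2 and metric dimension β ≥ 1 has at most (⌊2D/3⌋ + 1)^β + β · Σ_{i=1}^{⌈D/3⌉} (2i−1)^{β−1} vertices. -/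
open Finset

theorem Finset.card_le_prod_card_of_injOn_pi {α ι β : Type*} [Fintype ι]
    {s : Finset α} (t : ι → Finset β) (f : α → ι → β) (hf : ∀ a ∈ s, ∀ i, f a i ∈ t i)
    (hinj : Set.InjOn f s) : #s ≤ ∏ i, #(t i) := by
  classical
  rw [← Fintype.card_piFinset]
  exact card_le_card_of_injOn f (fun a ha => Fintype.mem_piFinset.2 (hf a ha)) hinj

theorem Finset.sum_range_two_mul_add_one_pow_eq_sum_Icc (n m : ℕ) :
    ∑ j ∈ range n, (2 * j + 1) ^ m = ∑ i ∈ Icc 1 n, (2 * i - 1) ^ m := by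
  induction n with
  | zero => rfl
  | succ n ih => rw [sum_range_succ, sum_Icc_succ_top (by omega), ih]; rfl

namespace SimpleGraph

variable {V : Type*} {G : SimpleGraph V}

theorem dist_le_gdiam [Finite V] (u v : V) : G.dist u v ≤ gdiam G :=
  le_csSup ((Set.finite_range fun p : V × V => G.dist p.1 p.2).bddAbove.mono
    (by rintro _ ⟨u, v, rfl⟩; exact ⟨(u, v), rfl⟩)) ⟨u, v, rfl⟩

theorem Connected.exists_resolves_card_eq_metricDim [Finite V] (hG : G.Connected) :
    ∃ S : Finset V, Resolves G S ∧ #S = metricDim G := by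
  have hne : {n | ∃ S : Set V, Resolves G S ∧ S.ncard = n}.Nonempty :=
    ⟨_, Set.univ, fun v w hvw => ⟨v, Set.mem_univ v, by
      rw [dist_self, ne_comm, Ne, hG.dist_eq_zero_iff]; exact hvw.symm⟩, rfl⟩
  obtain ⟨S, hS, hcard⟩ := Nat.sInf_mem hne
  refine ⟨S.toFinite.toFinset, by simpa using hS, ?_⟩
  rw [metricDim, ← hcard, ← Set.ncard_coe_finset, Set.Finite.coe_toFinset]

theorem card_le_card_far_add_sum_card_ball [Fintype V] [DecidableEq V] (S : Finset V) (k : ℕ) :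
    Fintype.card V ≤ #{v | ∀ x : S, k < G.dist v x} + ∑ x ∈ S, #{v | G.dist v x ≤ k} := by
  calc Fintype.card V
      ≤ #(({v | ∀ x : S, k < G.dist v x} : Finset V) ∪
          S.biUnion fun x => {v | G.dist v x ≤ k}) := by
        refine card_le_card fun v _ => ?_
        by_cases hfar : ∀ x : S, k < G.dist v x
        · exact mem_union_left _ (mem_filter.2 ⟨mem_univ v, hfar⟩)
        · push Not at hfar
          obtain ⟨x, hvx⟩ := hfar
          exact mem_union_right _ (mem_biUnion.2 ⟨x, x.2, mem_filter.2 ⟨mem_univ v, hvx⟩⟩)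
    _ ≤ _ := (card_union_le _ _).trans (Nat.add_le_add_left card_biUnion_le _)

end SimpleGraph

namespace Resolves

open SimpleGraph

variable {V : Type*} [Fintype V] {G : SimpleGraph V} {S : Finset V}

theorem card_far_le (hS : Resolves G S) (k : ℕ) :
    #{v | ∀ x : S, k < G.dist v x} ≤ (gdiam G - k) ^ #S := by
  calc #{v | ∀ x : S, k < G.dist v x}
      ≤ ∏ _x : S, #(Icc (k + 1) (gdiam G)) := by
        refine card_le_prod_card_of_injOn_pi _ (fun v (x : S) => G.dist v x) ?_ ?_
        · intro v hv x
          exact mem_Icc.2 ⟨(mem_filter.1 hv).2 x, dist_le_gdiam v x⟩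
        · intro v _ w _ hvw
          by_contra hne
          obtain ⟨x, hx, hdist⟩ := hS v w hne
          exact hdist (congrFun hvw ⟨x, hx⟩)
    _ = (gdiam G - k) ^ #S := by simp

theorem card_dist_eq_le (hG : G.Connected) (hS : Resolves G S) {x : V} (hx : x ∈ S) (j : ℕ) :
    #{v | G.dist v x = j} ≤ (2 * j + 1) ^ (#S - 1) := by
  classical
  calc #{v | G.dist v x = j}
      ≤ ∏ y : S.erase x, #(Icc (G.dist x y - j) (G.dist x y + j)) := by
        refine card_le_prod_card_of_injOn_pi _ (fun v (y : S.erase x) => G.dist v y) ?_ ?_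
        · intro v hv y
          have hvx : G.dist v x = j := (mem_filter.1 hv).2
          have h₁ : G.dist x y ≤ G.dist v x + G.dist v y := dist_comm (u := x) ▸ hG.dist_triangle
          have h₂ : G.dist v y ≤ G.dist v x + G.dist x y := hG.dist_triangle
          exact mem_Icc.2 ⟨by omega, by omega⟩
        · intro v hv w hw hvw
          by_contra hne
          obtain ⟨y, hy, hdist⟩ := hS v w hne
          have hyx : y ≠ x := by
            rintro rfl
            exact hdist ((mem_filter.1 hv).2.trans (mem_filter.1 hw).2.symm)
          exact hdist (congrFun hvw ⟨y, mem_erase.2 ⟨hyx, hy⟩⟩)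
    _ ≤ (2 * j + 1) ^ #(S.erase x) := by
        refine (prod_le_pow_card _ _ _ fun y _ => ?_).trans_eq (by rw [card_univ, Fintype.card_coe])
        rw [Nat.card_Icc]
        omega
    _ = (2 * j + 1) ^ (#S - 1) := by rw [card_erase_of_mem hx]

theorem card_dist_le_le (hG : G.Connected) (hS : Resolves G S) {x : V} (hx : x ∈ S) (k : ℕ) :
    #{v | G.dist v x ≤ k} ≤ ∑ j ∈ range (k + 1), (2 * j + 1) ^ (#S - 1) := by
  classical
  calc #{v | G.dist v x ≤ k}
      ≤ #((range (k + 1)).biUnion fun j => {v | G.dist v x = j}) :=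
        card_le_card fun v hv =>
          mem_biUnion.2 ⟨_, mem_range.2 (Nat.lt_succ_of_le (mem_filter.1 hv).2), by simp⟩
    _ ≤ ∑ j ∈ range (k + 1), #{v | G.dist v x = j} := card_biUnion_le
    _ ≤ _ := sum_le_sum fun j _ => hS.card_dist_eq_le hG hx j

end Resolves

open SimpleGraph in
theorem card_le_maxOrder_general {V : Type*} [Fintype V] (G : SimpleGraph V)
    (hG : G.Connected) (D β : ℕ) (hD : 2 ≤ D)
    (hdiam : gdiam G = D) (hdim : metricDim G = β) :
    Fintype.card V ≤
      (2 * D / 3 + 1) ^ β + β * ∑ i ∈ Finset.Icc 1 ((D + 2) / 3), (2 * i - 1) ^ (β - 1) := by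
  classical
  obtain ⟨S, hS, hcard⟩ := hG.exists_resolves_card_eq_metricDim
  rw [hdim] at hcard
  subst hcard hdiam
  obtain ⟨k, hk⟩ : ∃ k, k + 1 = (gdiam G + 2) / 3 := ⟨(gdiam G + 2) / 3 - 1, by omega⟩
  calc Fintype.card V
      ≤ #{v | ∀ x : S, k < G.dist v x} + ∑ x ∈ S, #{v | G.dist v x ≤ k} :=
        card_le_card_far_add_sum_card_ball S k
    _ ≤ (gdiam G - k) ^ #S + ∑ _x ∈ S, ∑ j ∈ range (k + 1), (2 * j + 1) ^ (#S - 1) :=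
        Nat.add_le_add (hS.card_far_le k) (sum_le_sum fun x hx => hS.card_dist_le_le hG hx k)
    _ ≤ _ := by
        rw [sum_const, smul_eq_mul, sum_range_two_mul_add_one_pow_eq_sum_Icc, hk]
        gcongr
        omega

/-- Note `2 * D / 3 = ⌊2D/3⌋` and `(D + 2) / 3 = ⌈D/3⌉` in natural-number arithmetic. -/
theorem card_le_maxOrder {V : Type*} [Fintype V] (G : SimpleGraph V)
    (hG : G.Connected) (D β : ℕ) (hD : 2 ≤ D) (hβ : 1 ≤ β)
    (hdiam : gdiam G = D) (hdim : metricDim G = β) :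
    Fintype.card V ≤
      (2 * D / 3 + 1) ^ β + β * ∑ i ∈ Finset.Icc 1 ((D + 2) / 3), (2 * i - 1) ^ (β - 1) :=
  card_le_maxOrder_general G hG D β hD hdiam hdim
end

section
/- Let S be a resolving set of size β in a connected graph G, and let v ∈ S. Then for every i ≥ 0, the number of vertices at distance exactly i from v is at most (2i+1)^{β−1}. -/
/-!
Record each vertex `w` of the sphere of radius `i` around `v` by its distance profile
`x ↦ d(w, x) - d(v, x)` on `S \ {v}`. By the triangle inequality every entry lies in `[-i, i]`,
so there are at most `(2i + 1) ^ (β - 1)` profiles, and the profile determines `w` because its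
distances to `S \ {v}` are read off from it while its distance to `v` is `i`.
-/

theorem Set.ncard_le_pow_of_injOn_abs_le {α ι : Type*} [Fintype ι] {s : Set α}
    {f : α → ι → ℤ} {r : ℕ} (hf : s.InjOn f) (hbound : ∀ a ∈ s, ∀ x, |f a x| ≤ r) :
    s.ncard ≤ (2 * r + 1) ^ Fintype.card ι := by
  classical
  let box : Finset (ι → ℤ) := Fintype.piFinset fun _ => Finset.Icc (-(r : ℤ)) r
  have hmaps : ∀ a ∈ s, f a ∈ (box : Set (ι → ℤ)) := fun a ha =>
    Fintype.mem_piFinset.mpr fun x => Finset.mem_Icc.mpr (abs_le.mp (hbound a ha x))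
  calc s.ncard ≤ (box : Set (ι → ℤ)).ncard :=
        Set.ncard_le_ncard_of_injOn f hmaps hf box.finite_toSet
    _ = (2 * r + 1) ^ Fintype.card ι := by
        rw [Set.ncard_coe_finset, Fintype.card_piFinset, Finset.prod_const, Int.card_Icc,
          Finset.card_univ]
        congr 1
        omega

section

variable {V : Type*} {G : SimpleGraph V}

theorem SimpleGraph.Connected.abs_dist_sub_dist_le (hG : G.Connected) (u w x : V) :
    |(G.dist u x : ℤ) - G.dist w x| ≤ G.dist u w := by
  have h₁ : G.dist u x ≤ G.dist u w + G.dist w x := hG.dist_triangle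
  have h₂ : G.dist w x ≤ G.dist w u + G.dist u x := hG.dist_triangle
  rw [G.dist_comm (u := w) (v := u)] at h₂
  rw [abs_le]
  constructor <;> omega

theorem Resolves.eq_of_forall_dist_eq {S : Set V} (hS : Resolves G S) {w w' : V}
    (h : ∀ x ∈ S, G.dist w x = G.dist w' x) : w = w' := by
  by_contra hne
  obtain ⟨x, hx, hdist⟩ := hS w w' hne
  exact hdist (h x hx)

theorem Resolves.ncard_sphere_le (hG : G.Connected) {S : Set V} (hS : Resolves G S)
    (hfin : S.Finite) {v : V} (hv : v ∈ S) (i : ℕ) :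
    {w | G.dist v w = i}.ncard ≤ (2 * i + 1) ^ (S.ncard - 1) := by
  have : Fintype ↥(S \ {v}) := hfin.sdiff.fintype
  have hcard : Fintype.card ↥(S \ {v}) = S.ncard - 1 := by
    rw [Fintype.card_eq_nat_card, Nat.card_coe_set_eq, Set.ncard_sdiff_singleton_of_mem hv]
  rw [← hcard]
  refine Set.ncard_le_pow_of_injOn_abs_le
    (f := fun w (x : ↥(S \ {v})) => (G.dist w x : ℤ) - G.dist v x) ?_ ?_
  · intro w hw w' hw' hprofile
    refine hS.eq_of_forall_dist_eq fun x hx => ?_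
    by_cases hxv : x = v
    · rw [hxv, G.dist_comm, hw, G.dist_comm, hw']
    · simpa using congrFun hprofile ⟨x, hx, hxv⟩
  · intro w hw x
    have hwv : G.dist w v = i := G.dist_comm.trans hw
    exact hwv ▸ hG.abs_dist_sub_dist_le w v x

end

theorem sphere_card_le {V : Type*} [Fintype V] (G : SimpleGraph V) (hG : G.Connected)
    (S : Set V) (β : ℕ) (hS : Resolves G S) (hcard : S.ncard = β)
    (v : V) (hv : v ∈ S) (i : ℕ) :
    {w : V | G.dist v w = i}.ncard ≤ (2 * i + 1) ^ (β - 1) :=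
  hcard ▸ hS.ncard_sphere_le hG S.toFinite hv i
end

section
/- Let D ≥ 2, β ≥ 1, and define the graph G with vertex set Q ∪ P ⊆ ℤ^β, where A=⌈D/3⌉, B=⌈D/3⌉+⌊D/3⌋, Q = {x : A ≤ x_i ≤ D for all i}, and P = ∪_{i,r} P_{i,r} with P_{i,r} = {x : x_i = r, and x_j ∈ [B−r, B+r] for j ≠ i} for r ∈ [0, A−1], with x,y adjacent iff |x_i − y_i| ≤ 1 for all i and x ≠ y. Then for all vertices x,y of G, dist_G(x,y) = max_i |x_i − y_i|. -/
/-- `A = ⌈D/3⌉` as an integer. -/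
def ceilD3 (D : ℕ) : ℤ := ((D + 2) / 3 : ℕ)

/-- `B = ⌈D/3⌉ + ⌊D/3⌋` as an integer. -/
def BD (D : ℕ) : ℤ := ceilD3 D + (D / 3 : ℕ)

/-- Membership in `Q`: all coordinates lie in `[A, D]`. -/
def memQ (D : ℕ) {β : ℕ} (x : Fin β → ℤ) : Prop :=
  ∀ i, ceilD3 D ≤ x i ∧ x i ≤ (D : ℤ)

/-- Membership in `P`: for some coordinate `i` and some `r ∈ [0, A−1]`,
`x i = r` and all other coordinates lie in `[B − r, B + r]`. -/
def memP (D : ℕ) {β : ℕ} (x : Fin β → ℤ) : Prop :=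
  ∃ i : Fin β, ∃ r : ℕ, (r : ℤ) < ceilD3 D ∧ x i = (r : ℤ) ∧
    ∀ j, j ≠ i → BD D - (r : ℤ) ≤ x j ∧ x j ≤ BD D + (r : ℤ)

/-- The vertex set `Q ∪ P ⊆ ℤ^β`. -/
def Vtx (D β : ℕ) : Type := {x : Fin β → ℤ // memQ D x ∨ memP D x}

/-- The graph on `Q ∪ P` where two distinct vertices are adjacent iff all their
coordinates differ by at most `1`. -/
def maxGraph (D β : ℕ) : SimpleGraph (Vtx D β) :=
  SimpleGraph.fromRel (fun x y => ∀ i, |x.1 i - y.1 i| ≤ 1)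


/-!
Moving every coordinate of `x` one unit toward `y` gives a vertex at sup-distance at most one
from `x` and one closer to `y`. Hence the graph distance of an L∞-adjacency graph equals the
L∞ distance as soon as, for any two vertices, this greedy step from one of them toward the other
stays in the vertex set. For `Q ∪ P` this holds: `Q` is a box, and from a point of a spike
`P_{i,r}` the step lands in some `P_{i,r'}` with `|r' - r| ≤ 1`, on the last level `A - 1` of
the target's spike, or in `Q`. A step from `Q` toward a spike is replaced by the step from the
spike toward `Q`.
-/

open Finset

section LInftyGraph

variable {ι : Type*}

def towards (x y : ι → ℤ) : ι → ℤ := fun k => x k + (y k - x k).sign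

lemma towards_apply_cases (x y : ι → ℤ) (k : ι) :
    (x k < y k ∧ towards x y k = x k + 1) ∨ (x k = y k ∧ towards x y k = x k) ∨
      (y k < x k ∧ towards x y k = x k - 1) := by
  unfold towards
  rcases lt_trichotomy (x k) (y k) with h | h | h
  · exact Or.inl ⟨h, by rw [Int.sign_eq_one_of_pos (by omega)]⟩
  · exact Or.inr (Or.inl ⟨h, by simp [h]⟩)
  · exact Or.inr (Or.inr ⟨h, by rw [Int.sign_eq_neg_one_of_neg (by omega)]; ring⟩)

lemma towards_ne {x y : ι → ℤ} (h : x ≠ y) : towards x y ≠ x := by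
  obtain ⟨k, hk⟩ := Function.ne_iff.1 h
  intro heq
  have := congrFun heq k
  rcases towards_apply_cases x y k with h | h | h <;> omega

lemma natAbs_towards_sub_le {x y : ι → ℤ} {n : ℕ} {k : ι} (h : (x k - y k).natAbs ≤ n + 1) :
    (towards x y k - y k).natAbs ≤ n := by
  rcases towards_apply_cases x y k with h | h | h <;> omega

def linftyGraph (V : (ι → ℤ) → Prop) : SimpleGraph {x // V x} :=
  SimpleGraph.fromRel fun x y => ∀ i, |x.1 i - y.1 i| ≤ 1

variable {V : (ι → ℤ) → Prop}

lemma linftyGraph_adj_iff {x y : {x // V x}} :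
    (linftyGraph V).Adj x y ↔ x ≠ y ∧ ∀ k, (x.1 k - y.1 k).natAbs ≤ 1 := by
  simp only [linftyGraph, SimpleGraph.fromRel_adj, abs_le]
  refine and_congr_right fun _ => ⟨?_, fun h => Or.inl fun k => by have := h k; omega⟩
  rintro (h | h) k <;> have := h k <;> omega

lemma natAbs_sub_le_length {x y : {x // V x}} (p : (linftyGraph V).Walk x y) (k : ι) :
    (x.1 k - y.1 k).natAbs ≤ p.length := by
  induction p with
  | nil => simp
  | cons h p ih =>
    have := (linftyGraph_adj_iff.1 h).2 k
    rw [SimpleGraph.Walk.length_cons]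
    omega

lemma linftyGraph_adj_towards {x y : {x // V x}} (hxy : x ≠ y) (h : V (towards x.1 y.1)) :
    (linftyGraph V).Adj x ⟨_, h⟩ := by
  refine linftyGraph_adj_iff.2 ⟨fun hx => towards_ne (Subtype.val_injective.ne hxy) ?_,
    fun k => ?_⟩
  · exact (congrArg Subtype.val hx).symm
  · rcases towards_apply_cases x.1 y.1 k with h | h | h <;> simp only [h.2] <;> omega

lemma exists_walk_length_le (hV : ∀ x y, V x → V y → V (towards x y) ∨ V (towards y x))
    (n : ℕ) (x y : {x // V x}) (hxy : ∀ k, (x.1 k - y.1 k).natAbs ≤ n) :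
    ∃ p : (linftyGraph V).Walk x y, p.length ≤ n := by
  induction n generalizing x y with
  | zero =>
    obtain rfl : x = y := Subtype.ext <| funext fun k => by have := hxy k; omega
    exact ⟨.nil, le_rfl⟩
  | succ n ih =>
    by_cases hne : x = y
    · subst hne
      exact ⟨.nil, Nat.zero_le _⟩
    rcases hV x.1 y.1 x.2 y.2 with hz | hz
    · obtain ⟨p, hp⟩ := ih ⟨_, hz⟩ y fun k => natAbs_towards_sub_le (hxy k)
      exact ⟨.cons (linftyGraph_adj_towards hne hz) p, by simpa using hp⟩
    · obtain ⟨p, hp⟩ := ih x ⟨_, hz⟩ fun k => by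
        show (x.1 k - towards y.1 x.1 k).natAbs ≤ n
        have := natAbs_towards_sub_le (x := y.1) (y := x.1) (n := n) (k := k) (by have := hxy k; omega)
        omega
      exact ⟨p.concat (linftyGraph_adj_towards (Ne.symm hne) hz).symm, by simpa using hp⟩

theorem linftyGraph_dist [Fintype ι]
    (hV : ∀ x y, V x → V y → V (towards x y) ∨ V (towards y x)) (x y : {x // V x}) :
    (linftyGraph V).dist x y = univ.sup fun k => (x.1 k - y.1 k).natAbs := by
  obtain ⟨p, hp⟩ := exists_walk_length_le hV _ x y fun k => le_sup (f := fun k =>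
    (x.1 k - y.1 k).natAbs) (mem_univ k)
  obtain ⟨q, hq⟩ := SimpleGraph.Reachable.exists_walk_length_eq_dist ⟨p⟩
  refine le_antisymm ((SimpleGraph.dist_le p).trans hp) (Finset.sup_le fun k _ => ?_)
  exact hq ▸ natAbs_sub_le_length q k

end LInftyGraph

section QP

variable {D β : ℕ} {x y : Fin β → ℤ}

lemma BD_bounds (D : ℕ) :
    2 * ceilD3 D - 1 ≤ BD D ∧ BD D ≤ 2 * ceilD3 D ∧ BD D + ceilD3 D - 1 ≤ D := by
  unfold BD ceilD3
  omega

lemma memP_mk (i : Fin β) (r : ℤ) (h0 : 0 ≤ r) (hr : r < ceilD3 D) (hi : x i = r)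
    (hj : ∀ j ≠ i, BD D - r ≤ x j ∧ x j ≤ BD D + r) : memP D x :=
  ⟨i, r.toNat, by omega, by omega, fun j hji => by have := hj j hji; omega⟩

lemma memQ_towards (hx : memQ D x) (hy : memQ D y) : memQ D (towards x y) := fun k => by
  have := hx k; have := hy k
  rcases towards_apply_cases x y k with h | h | h <;> omega

lemma memP_towards_of_lt {i : Fin β} {r : ℕ} (hr : (r : ℤ) + 1 < ceilD3 D) (hxi : x i = r)
    (hxj : ∀ j ≠ i, BD D - r ≤ x j ∧ x j ≤ BD D + r) (hyi : r < y i) :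
    memP D (towards x y) := by
  refine memP_mk i (r + 1) (by omega) hr ?_ fun j hj => ?_
  · rcases towards_apply_cases x y i with h | h | h <;> omega
  · have := hxj j hj
    rcases towards_apply_cases x y j with h | h | h <;> omega

lemma towards_mem_of_memP_of_memQ (hx : memP D x) (hy : memQ D y) :
    memQ D (towards x y) ∨ memP D (towards x y) := by
  obtain ⟨i, r, hr, hxi, hxj⟩ := hx
  have := hy i
  by_cases hr1 : (r : ℤ) + 1 < ceilD3 D
  · exact Or.inr (memP_towards_of_lt hr1 hxi hxj (by omega))
  refine Or.inl fun k => ?_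
  have := BD_bounds D; have := hy k
  by_cases hk : k = i
  · subst hk
    rcases towards_apply_cases x y k with h | h | h <;> omega
  · have := hxj k hk
    rcases towards_apply_cases x y k with h | h | h <;> omega

lemma towards_mem_of_memP_same_axis {i : Fin β} {r s : ℕ} (hr : (r : ℤ) < ceilD3 D)
    (hs : (s : ℤ) < ceilD3 D) (hxi : x i = r) (hyi : y i = s)
    (hxj : ∀ j ≠ i, BD D - r ≤ x j ∧ x j ≤ BD D + r)
    (hyj : ∀ j ≠ i, BD D - s ≤ y j ∧ y j ≤ BD D + s) :
    memP D (towards x y) := by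
  have hi := towards_apply_cases x y i
  refine memP_mk i (towards x y i) (by omega) (by omega) rfl fun j hj => ?_
  have := hxj j hj; have := hyj j hj
  rcases towards_apply_cases x y j with h | h | h <;> omega

lemma towards_mem_of_memP_other_axis {i j : Fin β} (hij : i ≠ j) {r s : ℕ}
    (hr : (r : ℤ) < ceilD3 D) (hs : (s : ℤ) < ceilD3 D) (hxi : x i = r) (hyj : y j = s)
    (hxk : ∀ k ≠ i, BD D - r ≤ x k ∧ x k ≤ BD D + r)
    (hyk : ∀ k ≠ j, BD D - s ≤ y k ∧ y k ≤ BD D + s) :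
    memQ D (towards x y) ∨ memP D (towards x y) := by
  have := BD_bounds D
  have hxj := hxk j hij.symm
  have hyi := hyk i hij
  by_cases hr1 : (r : ℤ) + 1 < ceilD3 D
  · exact Or.inr (memP_towards_of_lt hr1 hxi hxk (by omega))
  have hti := towards_apply_cases x y i
  have htj := towards_apply_cases x y j
  by_cases hAj : ceilD3 D ≤ towards x y j
  · refine Or.inl fun k => ?_
    by_cases hki : k = i
    · subst hki; omega
    by_cases hkj : k = j
    · subst hkj; omega
    have := hxk k hki; have := hyk k hkj
    rcases towards_apply_cases x y k with h | h | h <;> omega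
  · -- the step leaves `x` at the tip of spike `i` and enters spike `j` at its top level
    refine Or.inr (memP_mk j (ceilD3 D - 1) (by omega) (by omega) (by omega) fun k hkj => ?_)
    by_cases hki : k = i
    · subst hki; omega
    have := hxk k hki; have := hyk k hkj
    rcases towards_apply_cases x y k with h | h | h <;> omega

lemma towards_mem_of_memP (hx : memP D x) (hy : memQ D y ∨ memP D y) :
    memQ D (towards x y) ∨ memP D (towards x y) := by
  rcases hy with hy | ⟨j, s, hs, hyj, hyk⟩
  · exact towards_mem_of_memP_of_memQ hx hy
  obtain ⟨i, r, hr, hxi, hxk⟩ := hx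
  by_cases hij : i = j
  · subst hij
    exact Or.inr (towards_mem_of_memP_same_axis hr hs hxi hyj hxk hyk)
  · exact towards_mem_of_memP_other_axis hij hr hs hxi hyj hxk hyk

lemma towards_mem_or (hx : memQ D x ∨ memP D x) (hy : memQ D y ∨ memP D y) :
    (memQ D (towards x y) ∨ memP D (towards x y)) ∨
      (memQ D (towards y x) ∨ memP D (towards y x)) := by
  rcases hx with hxQ | hxP
  · rcases hy with hyQ | hyP
    · exact Or.inl (Or.inl (memQ_towards hxQ hyQ))
    · exact Or.inr (towards_mem_of_memP hyP (Or.inl hxQ))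
  · exact Or.inl (towards_mem_of_memP hxP hy)

end QP

theorem maxGraph_dist_general (D β : ℕ) (x y : Vtx D β) :
    (maxGraph D β).dist x y = Finset.univ.sup (fun i => (x.1 i - y.1 i).natAbs) :=
  linftyGraph_dist (fun _ _ => towards_mem_or) x y

theorem maxGraph_dist (D β : ℕ) (hD : 2 ≤ D) (hβ : 1 ≤ β) (x y : Vtx D β) :
    (maxGraph D β).dist x y = Finset.univ.sup (fun i => (x.1 i - y.1 i).natAbs) :=
  maxGraph_dist_general D β x y
end
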